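/- arXiv:2107.03092 — 2 statements merged into one kernel-verified Lean document; each statement's English description precedes it below -/
import Mathlib

section
/- Let G be a finite directed graph and r a vertex of G. The collection of (arc sets of) all r-directed spanning trees of G (directed spanning trees of G rooted at r) satisfies the weak exchange property: for every pair of distinct r-directed spanning trees T and T' of G, there exist e ∈ A(T) \ A(T') and e' ∈ A(T') \ A(T) such that T − e + e' is an r-directed spanning tree of G. -/
/-- The vertex set of a set of arcs. -/
def arcVerts {V : Type*} [DecidableEq V] (T : Finset (V × V)) : Finset V :=
  T.image Prod.fst ∪ T.image Prod.snd

/-- The in-degree of a vertex `v` in a set of arcs `T`. -/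
def inDeg {V : Type*} [DecidableEq V] (T : Finset (V × V)) (v : V) : ℕ :=
  (T.filter fun e => e.2 = v).card

/-- The step relation of a set of arcs: `arcRel T a b` iff `(a, b)` is an arc of `T`. -/
def arcRel {V : Type*} (T : Finset (V × V)) : V → V → Prop := fun a b => (a, b) ∈ T

/-- `T` is (the arc set of) a directed tree rooted at `r`: the root has in-degree `0`,
every other vertex has in-degree exactly `1`, and every vertex is reachable from `r`. -/
def IsDirTree {V : Type*} [DecidableEq V] (T : Finset (V × V)) (r : V) : Prop :=
  inDeg T r = 0 ∧ (∀ v ∈ arcVerts T, v ≠ r → inDeg T v = 1) ∧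
    ∀ v ∈ arcVerts T, Relation.ReflTransGen (arcRel T) r v

/-- `T` is a directed spanning tree of the digraph with arc set `A`, rooted at `r`. -/
def IsRDirSpanningTree {V : Type*} [DecidableEq V] (A : Finset (V × V)) (r : V)
    (T : Finset (V × V)) : Prop :=
  T ⊆ A ∧ IsDirTree T r ∧ ∀ v, v ≠ r → v ∈ arcVerts T

/-!
If `T ≠ T'`, some arc `(u, v)` of `T'` lies outside `T` (two spanning trees with one inside the
other coincide, since each non-root vertex has exactly one incoming arc), and following a
`T'`-path from `r` we may choose it so that its tail `u` is reachable from `r` along arcs common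
to `T` and `T'`. Let `e` be the unique `T`-arc into `v`; it is not in `T'`. Swapping `e` for
`(u, v)` preserves every in-degree, and `v` stays reachable through `u` without using `e`, so
every `T`-path from `r` can be rerouted: the result is again an `r`-directed spanning tree.
-/

namespace Relation.ReflTransGen

variable {α : Type*} {r s : α → α → Prop} {a b : α}

theorem exists_boundary {p : α → Prop} (h : ReflTransGen r a b) (ha : p a) (hb : ¬ p b) :
    ∃ x y, r x y ∧ p x ∧ ¬ p y := by
  induction h with
  | refl => exact absurd ha hb
  | @tail c d _ hcd ih =>
    by_cases hc : p c
    · exact ⟨c, d, hcd, hc, hb⟩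
    · exact ih hc

theorem reroute {x₀ w : α} (h : ReflTransGen r x₀ w)
    (hrs : ∀ x y, r x y → (x, y) ≠ (a, b) → s x y) (hb : ReflTransGen s x₀ b) :
    ReflTransGen s x₀ w := by
  induction h with
  | refl => exact .refl
  | @tail c d _ hcd ih =>
    by_cases hab : (c, d) = (a, b)
    · obtain ⟨-, rfl⟩ := Prod.ext_iff.mp hab
      exact hb
    · exact ih.tail (hrs c d hcd hab)

end Relation.ReflTransGen

section

variable {V : Type*}

theorem reflTransGen_arcRel_mono {T T' : Finset (V × V)} {a b : V} (hsub : T ⊆ T')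
    (h : Relation.ReflTransGen (arcRel T) a b) : Relation.ReflTransGen (arcRel T') a b :=
  Relation.ReflTransGen.mono (fun _ _ hxy => hsub hxy) _ _ h

variable [DecidableEq V] {A T T' : Finset (V × V)} {r v : V} {e e' : V × V}

theorem snd_mem_arcVerts (he : e ∈ T) : e.2 ∈ arcVerts T :=
  Finset.mem_union_right _ (Finset.mem_image_of_mem _ he)

theorem mem_arcVerts_of_inDeg_pos (h : 0 < inDeg T v) : v ∈ arcVerts T := by
  obtain ⟨f, hf⟩ := Finset.card_pos.mp h
  obtain ⟨hfT, rfl⟩ := Finset.mem_filter.mp hf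
  exact snd_mem_arcVerts hfT

theorem inDeg_eq_one_iff :
    inDeg T v = 1 ↔ ∃ e ∈ T, e.2 = v ∧ ∀ f ∈ T, f.2 = v → f = e := by
  simp only [inDeg, Finset.card_eq_one, Finset.eq_singleton_iff_unique_mem, Finset.mem_filter]
  exact ⟨fun ⟨e, he, huniq⟩ => ⟨e, he.1, he.2, fun f hf hfv => huniq f ⟨hf, hfv⟩⟩,
    fun ⟨e, heT, hev, huniq⟩ => ⟨e, ⟨heT, hev⟩, fun f hf => huniq f hf.1 hf.2⟩⟩

theorem snd_ne_of_inDeg_eq_zero (h : inDeg T r = 0) (he : e ∈ T) : e.2 ≠ r := fun her =>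
  Finset.card_eq_zero.mp h ▸ Finset.mem_filter.mpr ⟨he, her⟩ |> Finset.notMem_empty e

theorem inDeg_insert_erase (he : e ∈ T) (he' : e' ∉ T.erase e) (hsnd : e'.2 = e.2) (w : V) :
    inDeg (insert e' (T.erase e)) w = inDeg T w := by
  unfold inDeg
  rw [Finset.filter_insert, Finset.filter_erase]
  split_ifs with hw
  · have he'f : e' ∉ (T.filter fun f => f.2 = w).erase e := fun h =>
      he' (Finset.erase_subset_erase e (Finset.filter_subset _ T) h)
    rw [Finset.card_insert_of_notMem he'f,
      Finset.card_erase_add_one (Finset.mem_filter.mpr ⟨he, hsnd ▸ hw⟩)]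
  · have he_notMem : e ∉ T.filter fun f => f.2 = w := fun h =>
      hw (hsnd ▸ (Finset.mem_filter.mp h).2)
    rw [Finset.erase_eq_of_notMem he_notMem]

namespace IsRDirSpanningTree

variable (hT : IsRDirSpanningTree A r T)
include hT

theorem snd_ne_root (he : e ∈ T) : e.2 ≠ r :=
  snd_ne_of_inDeg_eq_zero hT.2.1.1 he

theorem inDeg_eq_one (hv : v ≠ r) : inDeg T v = 1 :=
  hT.2.1.2.1 v (hT.2.2 v hv) hv

theorem exists_unique_snd_eq (hv : v ≠ r) :
    ∃ e ∈ T, e.2 = v ∧ ∀ f ∈ T, f.2 = v → f = e :=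
  inDeg_eq_one_iff.mp (hT.inDeg_eq_one hv)

theorem eq_of_snd_eq {f : V × V} (he : e ∈ T) (hf : f ∈ T) (h : e.2 = f.2) : e = f := by
  obtain ⟨g, -, -, huniq⟩ := hT.exists_unique_snd_eq (hT.snd_ne_root he)
  rw [huniq e he rfl, huniq f hf h.symm]

theorem reflTransGen (w : V) : Relation.ReflTransGen (arcRel T) r w := by
  by_cases hw : w = r
  · exact hw ▸ .refl
  · exact hT.2.1.2.2 w (hT.2.2 w hw)

theorem eq_of_subset (hT' : IsRDirSpanningTree A r T') (hsub : T' ⊆ T) : T' = T := by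
  refine hsub.antisymm fun f hf => ?_
  obtain ⟨g, hgT', hgf, -⟩ := hT'.exists_unique_snd_eq (hT.snd_ne_root hf)
  rwa [← hT.eq_of_snd_eq (hsub hgT') hf hgf]

theorem exists_mem_sdiff_reflTransGen_inter (hT' : IsRDirSpanningTree A r T') (hne : T ≠ T') :
    ∃ e' ∈ T' \ T, Relation.ReflTransGen (arcRel (T ∩ T')) r e'.1 := by
  obtain ⟨f, hf⟩ : (T' \ T).Nonempty :=
    Finset.sdiff_nonempty.mpr fun hsub => hne (hT.eq_of_subset hT' hsub).symm
  by_cases hreach : Relation.ReflTransGen (arcRel (T ∩ T')) r f.1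
  · exact ⟨f, hf, hreach⟩
  obtain ⟨x, y, hxy, hx, hy⟩ := (hT'.reflTransGen f.1).exists_boundary .refl hreach
  refine ⟨(x, y), Finset.mem_sdiff.mpr ⟨hxy, fun hxyT => hy (hx.tail ?_)⟩, hx⟩
  exact Finset.mem_inter.mpr ⟨hxyT, hxy⟩

theorem insert_erase (he : e ∈ T) (he'A : e' ∈ A) (hsnd : e'.2 = e.2)
    (hreach : Relation.ReflTransGen (arcRel (T.erase e)) r e'.1) :
    IsRDirSpanningTree A r (insert e' (T.erase e)) := by
  have he' : e' ∉ T.erase e := fun h =>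
    (Finset.mem_erase.mp h).1 (hT.eq_of_snd_eq (Finset.mem_of_mem_erase h) he hsnd)
  have hdeg := inDeg_insert_erase he he' hsnd
  have hsub : T.erase e ⊆ insert e' (T.erase e) := Finset.subset_insert _ _
  have hreach' : Relation.ReflTransGen (arcRel (insert e' (T.erase e))) r e.2 :=
    hsnd ▸ (reflTransGen_arcRel_mono hsub hreach).tail (Finset.mem_insert_self e' _)
  have hspan : ∀ w, w ≠ r → w ∈ arcVerts (insert e' (T.erase e)) := fun w hw =>
    mem_arcVerts_of_inDeg_pos (by rw [hdeg, hT.inDeg_eq_one hw]; exact Nat.one_pos)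
  refine ⟨Finset.insert_subset he'A ((Finset.erase_subset e T).trans hT.1),
    ⟨hdeg r ▸ hT.2.1.1, fun w _ hw => hdeg w ▸ hT.inDeg_eq_one hw,
      fun w _ => ?_⟩, hspan⟩
  refine (hT.reflTransGen w).reroute (a := e.1) (b := e.2) (fun x y hxy hne => ?_) hreach'
  exact hsub (Finset.mem_erase.mpr ⟨hne, hxy⟩)

end IsRDirSpanningTree

end

theorem stmt2_general {V : Type*} [DecidableEq V] (A : Finset (V × V)) (r : V)
    (T T' : Finset (V × V))
    (hT : IsRDirSpanningTree A r T) (hT' : IsRDirSpanningTree A r T') (hne : T ≠ T') :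
    ∃ e ∈ T \ T', ∃ e' ∈ T' \ T, IsRDirSpanningTree A r (insert e' (T.erase e)) := by
  obtain ⟨e', he', hreach⟩ := hT.exists_mem_sdiff_reflTransGen_inter hT' hne
  obtain ⟨he'T', he'T⟩ := Finset.mem_sdiff.mp he'
  obtain ⟨e, heT, hsnd, -⟩ := hT.exists_unique_snd_eq (hT'.snd_ne_root he'T')
  have heT' : e ∉ T' := fun heT' =>
    he'T (hT'.eq_of_snd_eq heT' he'T' hsnd ▸ heT)
  have hinter : T ∩ T' ⊆ T.erase e :=
    Finset.subset_erase.mpr ⟨Finset.inter_subset_left, fun h => heT' (Finset.mem_inter.mp h).2⟩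
  refine ⟨e, Finset.mem_sdiff.mpr ⟨heT, heT'⟩, e', he', ?_⟩
  exact hT.insert_erase heT (hT'.1 he'T') hsnd.symm (reflTransGen_arcRel_mono hinter hreach)

/-- The collection of `r`-directed spanning trees of a finite digraph satisfies the
weak exchange property. -/
theorem stmt2 {V : Type*} [Fintype V] [DecidableEq V] (A : Finset (V × V)) (r : V)
    (T T' : Finset (V × V))
    (hT : IsRDirSpanningTree A r T) (hT' : IsRDirSpanningTree A r T') (hne : T ≠ T') :
    ∃ e ∈ T \ T', ∃ e' ∈ T' \ T, IsRDirSpanningTree A r (insert e' (T.erase e)) :=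
  stmt2_general A r T T' hT hT' hne
end

section
/- Let G be a finite directed graph, R a set of vertices of G, and k a positive integer. For every pair of R-directed forests F and F' in G with |A(F)| = |A(F')| = k, there exists a reconfiguration sequence ⟨F = F_0, F_1, …, F_ℓ = F'⟩ in which every F_i is an R-directed forest in G with k arcs, and whose length ℓ is at most k. -/
/-- `F` is (the arc set of) a directed forest: every vertex has in-degree at most `1`
and there is no directed cycle. -/
def IsDirForest {V : Type*} [DecidableEq V] (F : Finset (V × V)) : Prop :=
  (∀ v, inDeg F v ≤ 1) ∧ ∀ e ∈ F, ¬ Relation.ReflTransGen (arcRel F) e.2 e.1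

/-- `F` is an `R`-directed forest: a directed forest whose set of component roots is
exactly `R` (roots in `R` not incident to any arc of `F` form singleton components). -/
def IsRDirForest {V : Type*} [DecidableEq V] (R : Finset V) (F : Finset (V × V)) : Prop :=
  IsDirForest F ∧ (∀ r ∈ R, inDeg F r = 0) ∧ ∀ v ∈ arcVerts F, inDeg F v = 0 → v ∈ R

/-!
Fix the target `F'` and grow a set `P` of arcs common to the current forest `F` and to `F'`,
root first: every arc of `P` starts in `R` or at the head of another arc of `P`. As `F` has
in-degree at most one, the `F`-path into a head of `P` runs inside `P`.
Take an arc `e' = (u, v)` of `F' \ P` whose tail `u` lies in `R` or is a head of `P` (one of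
minimal depth in `F'`). If `e' ∈ F`, add it to `P`. Otherwise add `e'` to `F`: this closes no
cycle, since a path `v →* u` in `F` would lie in `P ⊆ F'`. Then delete an arc of `F \ P`: the
old arc into `v` if there is one, and otherwise one of maximal depth, whose head is a leaf.
Each exchange enlarges `P`, so at most `|F'| = k` of them are needed.
-/

open Relation Finset

section

variable {α : Type*} [DecidableEq α]

def ReconfSeq (S : Finset α → Prop) (ℓ : ℕ) (X Y : Finset α) : Prop :=
  ∃ f : ℕ → Finset α, f 0 = X ∧ f ℓ = Y ∧ (∀ i ≤ ℓ, S (f i)) ∧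
    ∀ i < ℓ, (f i \ f (i + 1)).card = 1 ∧ (f (i + 1) \ f i).card = 1

theorem ReconfSeq.refl {S : Finset α → Prop} {X : Finset α} (hX : S X) : ReconfSeq S 0 X X :=
  ⟨fun _ => X, rfl, rfl, fun _ _ => hX, fun _ hi => absurd hi (Nat.not_lt_zero _)⟩

theorem ReconfSeq.exchange {S : Finset α → Prop} {X Z : Finset α} {ℓ : ℕ} {e e' : α}
    (hX : S X) (he : e ∈ X) (he' : e' ∉ X)
    (h : ReconfSeq S ℓ (insert e' (X.erase e)) Z) : ReconfSeq S (ℓ + 1) X Z := by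
  obtain ⟨f, hf0, hfℓ, hS, hstep⟩ := h
  refine ⟨fun | 0 => X | i + 1 => f i, rfl, hfℓ, fun i hi => ?_, fun i hi => ?_⟩
  · cases i with
    | zero => exact hX
    | succ i => exact hS i (by omega)
  · cases i with
    | zero =>
      show (X \ f 0).card = 1 ∧ (f 0 \ X).card = 1
      rw [hf0]
      exact ⟨card_eq_one.mpr ⟨e, by grind⟩, card_eq_one.mpr ⟨e', by grind⟩⟩
    | succ i => exact hstep i (by omega)

theorem card_insert_erase {X : Finset α} {e e' : α} (he : e ∈ X) (he' : e' ∉ X) :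
    (insert e' (X.erase e)).card = X.card := by
  rw [card_insert_of_notMem fun h => he' (mem_of_mem_erase h), card_erase_add_one he]

end

section

variable {V : Type*}

theorem reflTransGen_arcRel_mono_s7 {G F : Finset (V × V)} (h : G ⊆ F) {a b : V}
    (hab : ReflTransGen (arcRel G) a b) : ReflTransGen (arcRel F) a b :=
  ReflTransGen.mono (fun _ _ hxy => h hxy) _ _ hab

def IsRootOrHead (R : Finset V) (P : Finset (V × V)) (x : V) : Prop :=
  x ∈ R ∨ ∃ g ∈ P, g.2 = x

def IsGrounded (R : Finset V) (P : Finset (V × V)) : Prop :=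
  ∀ e ∈ P, IsRootOrHead R P e.1

theorem IsRootOrHead.mono {R : Finset V} {P Q : Finset (V × V)} {x : V} (h : P ⊆ Q) :
    IsRootOrHead R P x → IsRootOrHead R Q x
  | .inl hx => .inl hx
  | .inr ⟨g, hg, hgx⟩ => .inr ⟨g, h hg, hgx⟩

variable [DecidableEq V]

theorem inDeg_eq_zero_iff {F : Finset (V × V)} {y : V} :
    inDeg F y = 0 ↔ ∀ e ∈ F, e.2 ≠ y := by
  simp [inDeg, filter_eq_empty_iff]

theorem inDeg_ne_zero_of_mem {F : Finset (V × V)} {e : V × V} (he : e ∈ F) :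
    inDeg F e.2 ≠ 0 :=
  fun h => inDeg_eq_zero_iff.mp h e he rfl

theorem exists_mem_snd_eq_of_inDeg_ne_zero {F : Finset (V × V)} {y : V} (h : inDeg F y ≠ 0) :
    ∃ e ∈ F, e.2 = y := by
  simpa [inDeg_eq_zero_iff] using h

theorem eq_of_inDeg_le_one {F : Finset (V × V)} {y : V} (hy : inDeg F y ≤ 1) {e f : V × V}
    (he : e ∈ F) (hf : f ∈ F) (hey : e.2 = y) (hfy : f.2 = y) : e = f :=
  card_le_one.mp hy _ (mem_filter.mpr ⟨he, hey⟩) _ (mem_filter.mpr ⟨hf, hfy⟩)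

theorem inDeg_mono {G F : Finset (V × V)} (h : G ⊆ F) (v : V) : inDeg G v ≤ inDeg F v :=
  card_le_card (filter_subset_filter _ h)

theorem inDeg_insert_of_ne {G : Finset (V × V)} {e : V × V} {v : V} (hv : v ≠ e.2) :
    inDeg (insert e G) v = inDeg G v := by
  rw [inDeg, filter_insert, if_neg (Ne.symm hv), inDeg]

theorem inDeg_insert_self {G : Finset (V × V)} {e : V × V} (h : inDeg G e.2 = 0) :
    inDeg (insert e G) e.2 = 1 := by
  rw [inDeg, filter_insert, if_pos rfl, card_eq_zero.mp h, insert_empty, card_singleton]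

theorem mem_arcVerts {T : Finset (V × V)} {a : V} :
    a ∈ arcVerts T ↔ ∃ e ∈ T, e.1 = a ∨ e.2 = a := by
  simp only [arcVerts, mem_union, mem_image]
  aesop

theorem reflTransGen_arcRel_insert {F : Finset (V × V)} {e : V × V} {a b : V}
    (h : ReflTransGen (arcRel (insert e F)) a b) :
    ReflTransGen (arcRel F) a b ∨
      ReflTransGen (arcRel F) a e.1 ∧ ReflTransGen (arcRel F) e.2 b := by
  induction h with
  | refl => exact .inl .refl
  | @tail m c _ harc ih =>
    rcases mem_insert.mp harc with rfl | hmc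
    · exact .inr ⟨ih.elim id And.left, .refl⟩
    · exact ih.imp (·.tail hmc) fun h => ⟨h.1, h.2.tail hmc⟩

theorem IsDirForest.mono {G F : Finset (V × V)} (hF : IsDirForest F) (h : G ⊆ F) :
    IsDirForest G :=
  ⟨fun v => (inDeg_mono h v).trans (hF.1 v),
    fun e he hc => hF.2 e (h he) (reflTransGen_arcRel_mono_s7 h hc)⟩

theorem IsDirForest.insert {G : Finset (V × V)} {e : V × V} (hG : IsDirForest G)
    (h0 : inDeg G e.2 = 0) (hnc : ¬ ReflTransGen (arcRel G) e.2 e.1) :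
    IsDirForest (insert e G) := by
  refine ⟨fun v => ?_, fun f hf hc => ?_⟩
  · by_cases hv : v = e.2
    · rw [hv, inDeg_insert_self h0]
    · rw [inDeg_insert_of_ne hv]
      exact hG.1 v
  rcases mem_insert.mp hf, reflTransGen_arcRel_insert hc with
    ⟨rfl | hfG, h | ⟨h1, h2⟩⟩
  · exact hnc h
  · exact hnc h2
  · exact hG.2 f hfG h
  · exact hnc ((h2.tail (show (f.1, f.2) ∈ G from hfG)).trans h1)

theorem IsDirForest.not_transGen_self {F : Finset (V × V)} (hF : IsDirForest F) (a : V) :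
    ¬ TransGen (arcRel F) a a := fun h => by
  obtain ⟨b, hab, hba⟩ := TransGen.tail'_iff.mp h
  exact hF.2 (b, a) hba hab

theorem IsDirForest.wellFounded [Finite V] {F : Finset (V × V)} (hF : IsDirForest F) :
    WellFounded (TransGen (arcRel F)) :=
  have : Std.Irrefl (TransGen (arcRel F)) := ⟨hF.not_transGen_self⟩
  Finite.wellFounded_of_trans_of_irrefl _

theorem IsDirForest.wellFounded_swap [Finite V] {F : Finset (V × V)} (hF : IsDirForest F) :
    WellFounded (Function.swap (TransGen (arcRel F))) :=
  have : Std.Irrefl (Function.swap (TransGen (arcRel F))) := ⟨hF.not_transGen_self⟩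
  Finite.wellFounded_of_trans_of_irrefl _

theorem IsGrounded.insert {R : Finset V} {P : Finset (V × V)} {e : V × V} (hP : IsGrounded R P)
    (he : IsRootOrHead R P e.1) : IsGrounded R (insert e P) := by
  intro f hf
  rcases mem_insert.mp hf with rfl | hf
  · exact he.mono (subset_insert _ _)
  · exact (hP f hf).mono (subset_insert _ _)

theorem isRDirForest_iff {R : Finset V} {F : Finset (V × V)} :
    IsRDirForest R F ↔ IsDirForest F ∧ (∀ r ∈ R, inDeg F r = 0) ∧ IsGrounded R F := by
  refine and_congr_right fun _ => and_congr_right fun _ =>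
    ⟨fun h e he => ?_, fun h v hv h0 => ?_⟩
  · by_cases h0 : inDeg F e.1 = 0
    · exact .inl (h _ (mem_arcVerts.mpr ⟨e, he, .inl rfl⟩) h0)
    · exact .inr (exists_mem_snd_eq_of_inDeg_ne_zero h0)
  · obtain ⟨e, he, rfl | rfl⟩ := mem_arcVerts.mp hv
    · rcases h e he with hR | ⟨g, hg, hge⟩
      · exact hR
      · exact absurd h0 (hge ▸ inDeg_ne_zero_of_mem hg)
    · exact absurd h0 (inDeg_ne_zero_of_mem he)

theorem IsRDirForest.isRootOrHead_snd_iff {R : Finset V} {F P : Finset (V × V)}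
    (hF : IsRDirForest R F) (hPF : P ⊆ F) {e : V × V} (he : e ∈ F) :
    IsRootOrHead R P e.2 ↔ e ∈ P := by
  refine ⟨fun h => ?_, fun h => .inr ⟨e, h, rfl⟩⟩
  rcases h with hr | ⟨p, hp, hpe⟩
  · exact absurd (hF.2.1 _ hr) (inDeg_ne_zero_of_mem he)
  · rwa [← eq_of_inDeg_le_one (hF.1.1 _) (hPF hp) he hpe rfl]

theorem IsRDirForest.reflTransGen_of_isRootOrHead {R : Finset V} {F P : Finset (V × V)}
    (hF : IsRDirForest R F) (hPF : P ⊆ F) (hP : IsGrounded R P) {v x : V}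
    (h : ReflTransGen (arcRel F) v x) (hx : IsRootOrHead R P x) :
    ReflTransGen (arcRel P) v x := by
  induction h with
  | refl => exact .refl
  | @tail t x _ htx ih =>
    have htx' : (t, x) ∈ P := (hF.isRootOrHead_snd_iff hPF htx).mp hx
    exact (ih (hP _ htx')).tail htx'

theorem IsRDirForest.exists_isRootOrHead_fst [Finite V] {R : Finset V} {F P : Finset (V × V)}
    (hF : IsRDirForest R F) (hne : (F \ P).Nonempty) :
    ∃ e ∈ F, e ∉ P ∧ IsRootOrHead R P e.1 := by
  obtain ⟨hFd, -, hFg⟩ := isRDirForest_iff.mp hF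
  obtain ⟨e, he, hmin⟩ :=
    (InvImage.wf Prod.fst hFd.wellFounded).has_min ((F \ P : Finset _) : Set (V × V))
      (coe_nonempty.mpr hne)
  rw [mem_coe, mem_sdiff] at he
  refine ⟨e, he.1, he.2, ?_⟩
  rcases hFg e he.1 with hr | ⟨g, hg, hge⟩
  · exact .inl hr
  by_cases hgP : g ∈ P
  · exact .inr ⟨g, hgP, hge⟩
  · refine absurd (TransGen.single ?_) (hmin g (mem_sdiff.mpr ⟨hg, hgP⟩))
    show (g.1, e.1) ∈ F
    rwa [← hge]

theorem IsRDirForest.exists_leaf [Finite V] {R : Finset V} {F P : Finset (V × V)}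
    (hF : IsRDirForest R F) (hPF : P ⊆ F) (hP : IsGrounded R P) (hne : (F \ P).Nonempty) :
    ∃ e ∈ F, e ∉ P ∧ ∀ f ∈ F, f.1 ≠ e.2 := by
  obtain ⟨e, he, hmax⟩ :=
    (InvImage.wf Prod.snd hF.1.wellFounded_swap).has_min ((F \ P : Finset _) : Set (V × V))
      (coe_nonempty.mpr hne)
  rw [mem_coe, mem_sdiff] at he
  refine ⟨e, he.1, he.2, fun f hf hfe => ?_⟩
  have hfP : f ∉ P := fun h => he.2 ((hF.isRootOrHead_snd_iff hPF he.1).mp (hfe ▸ hP f h))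
  refine hmax f (mem_sdiff.mpr ⟨hf, hfP⟩) (TransGen.single ?_)
  show (e.2, f.2) ∈ F
  rwa [← hfe]

theorem IsRDirForest.insert_erase {R : Finset V} {F : Finset (V × V)} {e e' : V × V}
    (hF : IsRDirForest R F) (he : e ∈ F) (hv : e'.2 ∉ R)
    (hnc : ¬ ReflTransGen (arcRel F) e'.2 e'.1) (hu : IsRootOrHead R (F.erase e) e'.1)
    (hrem : e.2 = e'.2 ∨ inDeg F e'.2 = 0 ∧ ∀ f ∈ F, f.1 ≠ e.2) :
    IsRDirForest R (insert e' (F.erase e)) := by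
  obtain ⟨hFd, hR, hFg⟩ := isRDirForest_iff.mp hF
  have hsub : F.erase e ⊆ F := erase_subset e F
  have h0 : inDeg (F.erase e) e'.2 = 0 := by
    refine inDeg_eq_zero_iff.mpr fun f hf hfv => ?_
    rcases hrem with h | ⟨h, -⟩
    · exact ne_of_mem_erase hf (eq_of_inDeg_le_one (hFd.1 _) (hsub hf) he hfv h)
    · exact inDeg_eq_zero_iff.mp h f (hsub hf) hfv
  refine isRDirForest_iff.mpr ⟨(hFd.mono hsub).insert h0
    (fun h => hnc (reflTransGen_arcRel_mono_s7 hsub h)), fun r hr => ?_, ?_⟩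
  · rw [inDeg_insert_of_ne (fun h => hv (h ▸ hr))]
    exact Nat.eq_zero_of_le_zero ((inDeg_mono hsub r).trans (hR r hr).le)
  intro f hf
  rcases mem_insert.mp hf with rfl | hf
  · exact hu.mono (subset_insert _ _)
  rcases hFg f (hsub hf) with hr | ⟨p, hp, hpf⟩
  · exact .inl hr
  by_cases hpe : p = e
  · subst hpe
    rcases hrem with h | ⟨-, hleaf⟩
    · exact .inr ⟨e', mem_insert_self _ _, h ▸ hpf⟩
    · exact absurd hpf.symm (hleaf f (hsub hf))
  · exact .inr ⟨p, mem_insert_of_mem (mem_erase.mpr ⟨hpe, hp⟩), hpf⟩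

theorem exists_exchange [Finite V] {R : Finset V} {F F' P : Finset (V × V)} {e' : V × V}
    (hF : IsRDirForest R F) (hF' : IsRDirForest R F') (hcard : F.card = F'.card)
    (hPF : P ⊆ F) (hPF' : P ⊆ F') (hP : IsGrounded R P)
    (he'F' : e' ∈ F') (he'F : e' ∉ F) (hu : IsRootOrHead R P e'.1) :
    ∃ e ∈ F, e ∉ P ∧ IsRDirForest R (insert e' (F.erase e)) := by
  have hv : e'.2 ∉ R := fun h => inDeg_ne_zero_of_mem he'F' (hF'.2.1 _ h)
  have hnc : ¬ ReflTransGen (arcRel F) e'.2 e'.1 := fun h =>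
    hF'.1.2 e' he'F' (reflTransGen_arcRel_mono_s7 hPF' (hF.reflTransGen_of_isRootOrHead hPF hP h hu))
  have hu' : ∀ e ∉ P, IsRootOrHead R (F.erase e) e'.1 := fun e he =>
    hu.mono fun p hp => mem_erase.mpr ⟨ne_of_mem_of_not_mem hp he, hPF hp⟩
  by_cases h0 : inDeg F e'.2 = 0
  · have hne : (F \ P).Nonempty := by
      refine sdiff_nonempty.mpr fun hFP => ?_
      have hlt := card_lt_card
        ((ssubset_iff_of_subset hPF').mpr ⟨e', he'F', fun h => he'F (hPF h)⟩)
      have hle := card_le_card hFP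
      omega
    obtain ⟨e, he, heP, hleaf⟩ := hF.exists_leaf hPF hP hne
    exact ⟨e, he, heP, hF.insert_erase he hv hnc (hu' e heP) (.inr ⟨h0, hleaf⟩)⟩
  · obtain ⟨e, he, hee'⟩ := exists_mem_snd_eq_of_inDeg_ne_zero h0
    have heP : e ∉ P := fun h =>
      he'F (eq_of_inDeg_le_one (hF'.1.1 _) (hPF' h) he'F' hee' rfl ▸ he)
    exact ⟨e, he, heP, hF.insert_erase he hv hnc (hu' e heP) (.inl hee')⟩

theorem exists_reconfSeq_of_grounded [Finite V] {A : Finset (V × V)} {R : Finset V}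
    {F' : Finset (V × V)} (hF'A : F' ⊆ A) (hF' : IsRDirForest R F') (n : ℕ) :
    ∀ F P : Finset (V × V), F ⊆ A → IsRDirForest R F → F.card = F'.card →
      P ⊆ F → P ⊆ F' → IsGrounded R P → (F' \ P).card ≤ n →
      ∃ ℓ ≤ n,
        ReconfSeq (fun H => H ⊆ A ∧ IsRDirForest R H ∧ H.card = F'.card) ℓ F F' := by
  induction n with
  | zero =>
    intro F P hFA hF hcard hPF _ _ hn
    have hF'P : F' ⊆ P := sdiff_eq_empty_iff_subset.mp (card_eq_zero.mp (Nat.le_zero.mp hn))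
    obtain rfl := (eq_of_subset_of_card_le (hF'P.trans hPF) hcard.le).symm
    exact ⟨0, le_rfl, .refl ⟨hFA, hF, rfl⟩⟩
  | succ n ih =>
    intro F P hFA hF hcard hPF hPF' hP hn
    by_cases hFF' : F = F'
    · subst hFF'
      exact ⟨0, Nat.zero_le _, .refl ⟨hFA, hF, hcard⟩⟩
    have hne : (F' \ P).Nonempty := sdiff_nonempty.mpr fun hF'P =>
      hFF' (eq_of_subset_of_card_le (hF'P.trans hPF) hcard.le).symm
    obtain ⟨e', he'F', he'P, hu⟩ := hF'.exists_isRootOrHead_fst hne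
    have hP' : IsGrounded R (insert e' P) := hP.insert hu
    have hn' : (F' \ insert e' P).card ≤ n := by
      rw [sdiff_insert, card_erase_of_mem (mem_sdiff.mpr ⟨he'F', he'P⟩)]
      omega
    by_cases he'F : e' ∈ F
    · obtain ⟨ℓ, hℓ, hseq⟩ := ih F _ hFA hF hcard (insert_subset he'F hPF)
        (insert_subset he'F' hPF') hP' hn'
      exact ⟨ℓ, hℓ.trans n.le_succ, hseq⟩
    obtain ⟨e, he, heP, hF₁⟩ := exists_exchange hF hF' hcard hPF hPF' hP he'F' he'F hu
    have hF₁A : insert e' (F.erase e) ⊆ A :=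
      insert_subset (hF'A he'F') ((erase_subset _ _).trans hFA)
    have hPF₁ : insert e' P ⊆ insert e' (F.erase e) :=
      insert_subset_insert _ (subset_erase.mpr ⟨hPF, heP⟩)
    obtain ⟨ℓ, hℓ, hseq⟩ := ih _ _ hF₁A hF₁ ((card_insert_erase he he'F).trans hcard)
      hPF₁ (insert_subset he'F' hPF') hP' hn'
    exact ⟨ℓ + 1, by omega, hseq.exchange ⟨hFA, hF, hcard⟩ he he'F⟩

end

theorem stmt7_general {V : Type*} [Fintype V] [DecidableEq V] (A : Finset (V × V)) (R : Finset V)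
    (k : ℕ) (F F' : Finset (V × V))
    (hFA : F ⊆ A) (hF'A : F' ⊆ A) (hF : IsRDirForest R F) (hF' : IsRDirForest R F')
    (hkF : F.card = k) (hkF' : F'.card = k) :
    ∃ ℓ ≤ k, ∃ f : ℕ → Finset (V × V), f 0 = F ∧ f ℓ = F' ∧
      (∀ i ≤ ℓ, f i ⊆ A ∧ IsRDirForest R (f i) ∧ (f i).card = k) ∧
      (∀ i < ℓ, (f i \ f (i + 1)).card = 1 ∧ (f (i + 1) \ f i).card = 1) := by
  subst hkF'
  exact exists_reconfSeq_of_grounded hF'A hF' _ F ∅ hFA hF hkF (empty_subset _)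
    (empty_subset _) (fun _ h => absurd h (notMem_empty _)) (by rw [sdiff_empty])

/-- Any two `R`-directed forests with `k` arcs in a finite digraph are connected by a
reconfiguration sequence of `R`-directed forests with `k` arcs, of length at most `k`. -/
theorem stmt7 {V : Type*} [Fintype V] [DecidableEq V] (A : Finset (V × V)) (R : Finset V)
    (k : ℕ) (hk : 0 < k) (F F' : Finset (V × V))
    (hFA : F ⊆ A) (hF'A : F' ⊆ A) (hF : IsRDirForest R F) (hF' : IsRDirForest R F')
    (hkF : F.card = k) (hkF' : F'.card = k) :
    ∃ ℓ ≤ k, ∃ f : ℕ → Finset (V × V), f 0 = F ∧ f ℓ = F' ∧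
      (∀ i ≤ ℓ, f i ⊆ A ∧ IsRDirForest R (f i) ∧ (f i).card = k) ∧
      (∀ i < ℓ, (f i \ f (i + 1)).card = 1 ∧ (f (i + 1) \ f i).card = 1) :=
  stmt7_general A R k F F' hFA hF'A hF hF' hkF hkF'
end
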